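/- arXiv:2204.12249 — 5 statements merged into one kernel-verified Lean document; each statement's English description precedes it below -/
import Mathlib

section
/- Let A be a commutative ring and R : ℤ × ℤ → A a function with R(p,q) = 0 whenever p ≤ 0 or q ≤ 0. In the ring of formal Laurent series over A in a variable u, set ϑ₀ := 1 and, for each integer q ≥ 1, ϑ_q := u^{−q} + Σ_{p≥1} R(p,q)·u^p. Assume that for every integer k ≥ 1 the multiplication rule ϑ₁ · ϑ_k = ϑ_{k+1} + Σ_{r=0}^{k} R(k−r,1)·ϑ_r + Σ_{r=0}^{k} R(1−r,k)·ϑ_r holds. Then R(1,n) = n·R(n,1) for every integer n ≥ 1. -/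
/-!
The Euler operator `D = u d/du` is a derivation of `A⸨u⸩` whose values have zero constant
coefficient. Since `D (f ^ (m + 1)) = (m + 1) • f ^ m * D f`, the constant coefficient of
`f ^ m * D f` vanishes over a torsion-free ring, hence over every ring by base change from a
polynomial ring over `ℤ`; so it vanishes for `P(f) * D f` for every polynomial `P`.
The multiplication rule makes every `ϑ_n` a polynomial in `ϑ₁`, and expanding
`ϑ_n = u^(-n) + …` and `D ϑ₁ = -u^(-1) + …` the constant coefficient of `ϑ_n * D ϑ₁` is
`n • R (n, 1) - R (1, n)`.
-/

namespace HahnSeries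

section MapRingHom

variable {Γ R S : Type*} [AddCommMonoid Γ] [PartialOrder Γ] [IsOrderedCancelAddMonoid Γ]
  [Semiring R] [Semiring S]

noncomputable def mapRingHom (f : R →+* S) : HahnSeries Γ R →+* HahnSeries Γ S where
  toFun x := x.map f
  map_one' := HahnSeries.map_one f.toMonoidWithZeroHom
  map_mul' _ _ := HahnSeries.map_mul f.toNonUnitalRingHom
  map_zero' := HahnSeries.map_zero f.toZeroHom
  map_add' x y := by ext; simp

@[simp]
theorem coeff_mapRingHom (f : R →+* S) (x : HahnSeries Γ R) (a : Γ) :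
    (mapRingHom f x).coeff a = f (x.coeff a) := rfl

end MapRingHom

theorem exists_mapRingHom_eq {Γ A : Type*} [AddCommMonoid Γ] [PartialOrder Γ]
    [IsOrderedCancelAddMonoid Γ] [CommRing A] (x : HahnSeries Γ A) :
    ∃ (ψ : MvPolynomial Γ ℤ →+* A) (y : HahnSeries Γ (MvPolynomial Γ ℤ)), mapRingHom ψ y = x := by
  classical
  refine ⟨MvPolynomial.eval₂Hom (Int.castRingHom A) x.coeff,
    ⟨fun n => if x.coeff n = 0 then 0 else MvPolynomial.X n,
      x.isPWO_support.mono fun n hn => ?_⟩, ?_⟩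
  · by_contra h
    simp_all
  · ext n
    by_cases h : x.coeff n = 0 <;> simp [h]

end HahnSeries

namespace LaurentSeries

open HahnSeries

variable {A : Type*} [CommRing A]

noncomputable def eulerD (x : LaurentSeries A) : LaurentSeries A where
  coeff n := n • x.coeff n
  isPWO_support' := x.isPWO_support.mono (Function.support_smul_subset_right (fun n : ℤ => n) _)

@[simp]
theorem coeff_eulerD (x : LaurentSeries A) (n : ℤ) : (eulerD x).coeff n = n • x.coeff n := rfl

theorem support_eulerD_subset (x : LaurentSeries A) : (eulerD x).support ⊆ x.support :=
  Function.support_smul_subset_right (fun n : ℤ => n) _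

theorem eulerD_mul (x y : LaurentSeries A) : eulerD (x * y) = x * eulerD y + y * eulerD x := by
  ext n
  rw [coeff_add, coeff_eulerD, coeff_mul, coeff_mul_right' y.isPWO_support (support_eulerD_subset y),
    mul_comm y, coeff_mul_left' x.isPWO_support (support_eulerD_subset x), Finset.smul_sum,
    ← Finset.sum_add_distrib]
  refine Finset.sum_congr rfl fun ij hij => ?_
  rw [← (Finset.mem_antidiagonal.mp hij).2.2, coeff_eulerD, coeff_eulerD, add_smul, smul_mul_assoc,
    mul_smul_comm, add_comm]

theorem eulerD_add (x y : LaurentSeries A) : eulerD (x + y) = eulerD x + eulerD y := by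
  ext n
  simp [smul_add]

theorem eulerD_single (a : ℤ) (c : A) : eulerD (single a c) = single a (a • c) := by
  ext n
  by_cases h : n = a
  · simp [h]
  · simp [coeff_single_of_ne h]

theorem eulerD_pow_succ (x : LaurentSeries A) (m : ℕ) :
    eulerD (x ^ (m + 1)) = (m + 1) • (x ^ m * eulerD x) := by
  induction m with
  | zero => simp
  | succ m ih =>
    rw [pow_succ, eulerD_mul, ih]
    ring

theorem coeff_zero_eulerD (x : LaurentSeries A) : (eulerD x).coeff 0 = 0 := by
  simp

theorem mapRingHom_eulerD {B : Type*} [CommRing B] (f : A →+* B) (x : LaurentSeries A) :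
    mapRingHom f (eulerD x) = eulerD (mapRingHom f x) := by
  ext n
  simp

theorem coeff_zero_pow_mul_eulerD_of_isAddTorsionFree [IsAddTorsionFree A] (x : LaurentSeries A)
    (m : ℕ) : (x ^ m * eulerD x).coeff 0 = 0 := by
  have h := coeff_zero_eulerD (x ^ (m + 1))
  rw [eulerD_pow_succ, coeff_nsmul, Pi.smul_apply] at h
  exact nsmul_right_injective m.succ_ne_zero (h.trans (smul_zero _).symm)

theorem coeff_zero_pow_mul_eulerD (x : LaurentSeries A) (m : ℕ) :
    (x ^ m * eulerD x).coeff 0 = 0 := by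
  obtain ⟨ψ, y, rfl⟩ := exists_mapRingHom_eq x
  rw [← mapRingHom_eulerD, ← map_pow, ← map_mul, coeff_mapRingHom,
    coeff_zero_pow_mul_eulerD_of_isAddTorsionFree, map_zero]

-- `Algebra A A⸨X⸩` is inferred through `A⟦X⟧`, so its scalar action is not definitionally the
-- coefficientwise one.
theorem algebraMap_mul_eq_smul (a : A) (y : LaurentSeries A) :
    algebraMap A (LaurentSeries A) a * y = a • y := by
  rw [algebraMap_apply', PowerSeries.algebraMap_eq, ofPowerSeries_C, C_mul_eq_smul]

theorem coeff_zero_mul_eulerD_of_mem_adjoin {f x : LaurentSeries A}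
    (hx : x ∈ Algebra.adjoin A {f}) : (x * eulerD f).coeff 0 = 0 := by
  rw [Algebra.adjoin_singleton_eq_range_aeval, AlgHom.mem_range] at hx
  obtain ⟨P, rfl⟩ := hx
  induction P using Polynomial.induction_on' with
  | add p q hp hq => rw [map_add, add_mul, coeff_add, hp, hq, add_zero]
  | monomial k a =>
    rw [Polynomial.aeval_monomial, mul_assoc, algebraMap_mul_eq_smul, coeff_smul, coeff_zero_pow_mul_eulerD,
      smul_zero]

theorem coeff_ofPowerSeries_of_nonpos {ψ : PowerSeries A} (hψ : PowerSeries.constantCoeff ψ = 0)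
    {n : ℤ} (hn : n ≤ 0) : (ofPowerSeries ℤ A ψ).coeff n = 0 := by
  rw [PowerSeries.coeff_coe]
  split_ifs with h
  · rfl
  · rw [show n.natAbs = 0 by omega, PowerSeries.coeff_zero_eq_constantCoeff_apply, hψ]

theorem coeff_zero_single_add_mul_single_add {a b : ℤ} (ha : 0 < a) (hb : 0 < b) (c d : A)
    {X Y : LaurentSeries A} (hX : ∀ i ≤ 0, X.coeff i = 0) (hY : ∀ i ≤ 0, Y.coeff i = 0) :
    ((single (-a) c + X) * (single (-b) d + Y)).coeff 0 = c * Y.coeff a + X.coeff b * d := by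
  have hcY : (single (-a) c * Y).coeff (a + -a) = c * Y.coeff a := coeff_single_mul_add
  have hXd : (X * single (-b) d).coeff (b + -b) = X.coeff b * d := coeff_mul_single_add
  have hXY : (X * Y).coeff 0 = 0 := by
    rw [coeff_mul]
    refine Finset.sum_eq_zero fun ij hij => ?_
    obtain ⟨hi, hj, hij⟩ := Finset.mem_antidiagonal.mp hij
    by_cases h : ij.1 ≤ 0
    · exact absurd (hX _ h) hi
    · exact absurd (hY _ (by omega)) hj
  rw [add_neg_cancel] at hcY hXd
  rw [add_mul, mul_add, mul_add, coeff_add, coeff_add, coeff_add, single_mul_single,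
    coeff_single_of_ne (by omega), hcY, hXd, hXY]
  ring

end LaurentSeries

theorem natCast_mem_adjoin_of_sub_mul_eq_sum {A S : Type*} [CommRing A] [CommRing S]
    [Algebra A S] (θ : ℤ → S) (h0 : θ 0 = 1)
    (hstep : ∀ k : ℤ, 1 ≤ k → ∃ c : ℤ → A,
      θ (k + 1) - θ 1 * θ k = ∑ r ∈ Finset.Icc 0 k, algebraMap A S (c r) * θ r)
    (n : ℕ) : θ n ∈ Algebra.adjoin A {θ 1} := by
  induction n using Nat.strong_induction_on with
  | _ n ih =>
    match n, ih with
    | 0, _ => simp [h0]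
    | 1, _ => simp
    | k + 2, ih =>
      obtain ⟨c, hc⟩ := hstep (k + 1 : ℕ) (by omega)
      have hsum : θ ((k + 1 : ℕ) + 1) - θ 1 * θ (k + 1 : ℕ) ∈ Algebra.adjoin A {θ 1} := by
        rw [hc]
        refine Subalgebra.sum_mem _ fun r hr => mul_mem (Subalgebra.algebraMap_mem _ _) ?_
        obtain ⟨hr0, hrk⟩ := Finset.mem_Icc.mp hr
        lift r to ℕ using hr0
        exact ih r (by omega)
      have hmem := add_mem hsum
        (mul_mem (Algebra.self_mem_adjoin_singleton A (θ 1)) (ih (k + 1) (by omega)))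
      rw [sub_add_cancel] at hmem
      convert hmem using 2
      push_cast
      ring

open LaurentSeries HahnSeries in
theorem statement0_general (A : Type*) [CommRing A] (R : ℤ × ℤ → A)
    (θ : ℤ → LaurentSeries A)
    (hθ0 : θ 0 = 1)
    (hθ : ∀ q : ℤ, 1 ≤ q →
      θ q = HahnSeries.single (-q) (1 : A) +
        HahnSeries.ofPowerSeries ℤ A
          (PowerSeries.mk fun p : ℕ => if 1 ≤ p then R ((p : ℤ), q) else 0))
    (hmul : ∀ k : ℤ, 1 ≤ k →
      θ 1 * θ k = θ (k + 1)
        + (∑ r ∈ Finset.Icc (0 : ℤ) k, R (k - r, 1) • θ r)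
        + ∑ r ∈ Finset.Icc (0 : ℤ) k, R (1 - r, k) • θ r) :
    ∀ n : ℤ, 1 ≤ n → R (1, n) = n • R (n, 1) := by
  set T : ℤ → LaurentSeries A := fun q =>
    ofPowerSeries ℤ A (PowerSeries.mk fun p : ℕ => if 1 ≤ p then R ((p : ℤ), q) else 0)
  have hT_nonpos (q i : ℤ) (hi : i ≤ 0) : (T q).coeff i = 0 :=
    coeff_ofPowerSeries_of_nonpos (by simp) hi
  have hT_pos (q i : ℤ) (hi : 1 ≤ i) : (T q).coeff i = R (i, q) := by
    lift i to ℕ using by omega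
    simp [T, ofPowerSeries_apply_coeff, show 1 ≤ i by omega]
  have hθT (q : ℤ) (hq : 1 ≤ q) : θ q = single (-q) 1 + T q := hθ q hq
  intro n hn
  lift n to ℕ using by omega
  have hadjoin : θ n ∈ Algebra.adjoin A {θ 1} := by
    refine natCast_mem_adjoin_of_sub_mul_eq_sum θ hθ0 (fun k hk => ?_) n
    refine ⟨fun r => -(R (k - r, 1) + R (1 - r, k)), ?_⟩
    simp only [hmul k hk, algebraMap_mul_eq_smul, neg_smul, add_smul, Finset.sum_neg_distrib,
      Finset.sum_add_distrib]
    ring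
  have hres := coeff_zero_mul_eulerD_of_mem_adjoin hadjoin
  rw [hθT n hn, hθT 1 le_rfl, eulerD_add, eulerD_single,
    coeff_zero_single_add_mul_single_add (by omega) one_pos _ _ (hT_nonpos n)
      (fun i hi => by rw [coeff_eulerD, hT_nonpos 1 i hi, smul_zero]),
    coeff_eulerD, hT_pos n 1 le_rfl, hT_pos 1 n hn] at hres
  linear_combination -hres

/-- Let `A` be a commutative ring and `R : ℤ × ℤ → A` a function with
`R (p, q) = 0` whenever `p ≤ 0` or `q ≤ 0`.  In the ring of formal Laurent series over `A`
(in the variable `u`), set `ϑ₀ := 1` and, for `q ≥ 1`,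
`ϑ_q := u^(-q) + ∑_{p ≥ 1} R (p, q) • u^p`.  Assume the multiplication rule
`ϑ₁ * ϑ_k = ϑ_{k+1} + ∑_{r=0}^{k} R (k - r, 1) • ϑ_r + ∑_{r=0}^{k} R (1 - r, k) • ϑ_r`
for every `k ≥ 1`.  Then `R (1, n) = n • R (n, 1)` for every integer `n ≥ 1`. -/
theorem statement0 (A : Type*) [CommRing A] (R : ℤ × ℤ → A)
    (hvanish : ∀ p q : ℤ, p ≤ 0 ∨ q ≤ 0 → R (p, q) = 0)
    (θ : ℤ → LaurentSeries A)
    (hθ0 : θ 0 = 1)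
    (hθ : ∀ q : ℤ, 1 ≤ q →
      θ q = HahnSeries.single (-q) (1 : A) +
        HahnSeries.ofPowerSeries ℤ A
          (PowerSeries.mk fun p : ℕ => if 1 ≤ p then R ((p : ℤ), q) else 0))
    (hmul : ∀ k : ℤ, 1 ≤ k →
      θ 1 * θ k = θ (k + 1)
        + (∑ r ∈ Finset.Icc (0 : ℤ) k, R (k - r, 1) • θ r)
        + ∑ r ∈ Finset.Icc (0 : ℤ) k, R (1 - r, k) • θ r) :
    ∀ n : ℤ, 1 ≤ n → R (1, n) = n • R (n, 1) :=
  statement0_general A R θ hθ0 hθ hmul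
end

section
/- Let A be a commutative ring and R : ℤ × ℤ → A a function with R(p,q) = 0 whenever p ≤ 0 or q ≤ 0. In the ring of formal Laurent series over A in a variable u, set ϑ₀ := 1 and, for each integer q ≥ 1, ϑ_q := u^{−q} + Σ_{p≥1} R(p,q)·u^p. Fix an integer k ≥ 1 and assume the multiplication rule ϑ₁ · ϑ_k = ϑ_{k+1} + Σ_{r=0}^{k} R(k−r,1)·ϑ_r + Σ_{r=0}^{k} R(1−r,k)·ϑ_r. Then for every integer n > k the following relation holds: R(n−k, k+1) + Σ_{r=1}^{k−1} R(k−r,1)·R(n−k,r) = R(n−k+1, k) + R(n,1) + Σ_{a=1}^{n−k−1} R(a,1)·R(n−k−a, k). -/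
/-!
Take the coefficient of `u^(n-k)` on both sides of the multiplication rule. On the left,
`(u⁻¹ + F₁)(u^(-k) + F_k)`, with `F_q` the power-series part of `ϑ_q`, contributes
`R (n-k+1, k)` from `u⁻¹ F_k`, `R (n, 1)` from `F₁ u^(-k)` and the convolution of `F₁`
and `F_k`. On the right `ϑ_r` contributes `R (n-k, r)` (and `ϑ₀ = 1` nothing), so the last
sum of the rule drops out because `R (1-r, k) = 0` for `r ≥ 1`.
-/

theorem Finset.sum_Icc_zero_natCast_eq_sum_range {M : Type*} [AddCommMonoid M] (f : ℤ → M)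
    (m : ℕ) :
    ∑ a ∈ Finset.Icc (0 : ℤ) m, f a = ∑ i ∈ Finset.range (m + 1), f i := by
  rw [Int.Icc_eq_finset_map, Finset.sum_map]
  simp

theorem Finset.sum_Icc_eq_sum_Icc_add_one_sub_one {M : Type*} [AddCommMonoid M] {f : ℤ → M}
    {a b : ℤ} (ha : f a = 0) (hb : f b = 0) :
    ∑ x ∈ Finset.Icc a b, f x = ∑ x ∈ Finset.Icc (a + 1) (b - 1), f x := by
  refine (Finset.sum_subset (fun x hx => by simp only [Finset.mem_Icc] at *; omega) ?_).symm
  intro x hx hx'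
  simp only [Finset.mem_Icc] at hx hx'
  obtain rfl | rfl : x = a ∨ x = b := by omega
  exacts [ha, hb]

section
variable {A : Type*} [CommRing A]

theorem PowerSeries.mk_ite_one_le_eq (g : ℤ → A) (hg : ∀ p ≤ 0, g p = 0) :
    (PowerSeries.mk fun p : ℕ => if 1 ≤ p then g p else 0) =
      PowerSeries.mk fun p : ℕ => g p := by
  ext p
  simp only [PowerSeries.coeff_mk]
  split_ifs with hp
  · rfl
  · exact (hg _ (by omega)).symm

theorem HahnSeries.coeff_ofPowerSeries_mk (g : ℤ → A) {m : ℤ} (hm : 0 ≤ m) :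
    (HahnSeries.ofPowerSeries ℤ A (PowerSeries.mk fun p : ℕ => g p)).coeff m = g m := by
  lift m to ℕ using hm
  rw [HahnSeries.ofPowerSeries_apply_coeff, PowerSeries.coeff_mk]

theorem HahnSeries.coeff_ofPowerSeries_mk_mul (g h : ℤ → A) {m : ℤ} (hm : 0 ≤ m) :
    (HahnSeries.ofPowerSeries ℤ A (PowerSeries.mk fun p : ℕ => g p) *
        HahnSeries.ofPowerSeries ℤ A (PowerSeries.mk fun p : ℕ => h p)).coeff m =
      ∑ a ∈ Finset.Icc 0 m, g a * h (m - a) := by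
  lift m to ℕ using hm
  rw [← map_mul, HahnSeries.ofPowerSeries_apply_coeff, PowerSeries.coeff_mul,
    Finset.Nat.sum_antidiagonal_eq_sum_range_succ_mk, Finset.sum_Icc_zero_natCast_eq_sum_range]
  refine Finset.sum_congr rfl fun i hi => ?_
  rw [Finset.mem_range] at hi
  simp [Nat.cast_sub (by omega : i ≤ m)]

/-- For `q ≥ 1` and `R (0, q) = 0` this is the paper's `ϑ_q`. -/
noncomputable def theta (R : ℤ × ℤ → A) (q : ℤ) : LaurentSeries A :=
  HahnSeries.single (-q) 1 + HahnSeries.ofPowerSeries ℤ A (PowerSeries.mk fun p : ℕ => R (p, q))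

theorem coeff_theta (R : ℤ × ℤ → A) {q m : ℤ} (hq : 0 < q) (hm : 0 ≤ m) :
    (theta R q).coeff m = R (m, q) := by
  rw [theta, HahnSeries.coeff_add, HahnSeries.coeff_single_of_ne (by omega), zero_add,
    HahnSeries.coeff_ofPowerSeries_mk (fun p => R (p, q)) hm]

theorem coeff_theta_mul_theta (R : ℤ × ℤ → A) {q q' m : ℤ} (hq : 0 < q) (hq' : 0 < q')
    (hm : 0 ≤ m) :
    (theta R q * theta R q').coeff m =
      R (m + q, q') + R (m + q', q) + ∑ a ∈ Finset.Icc 0 m, R (a, q) * R (m - a, q') := by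
  have hsingle : (HahnSeries.single (-q) (1 : A) * HahnSeries.single (-q') 1).coeff m = 0 := by
    rw [HahnSeries.single_mul_single, HahnSeries.coeff_single_of_ne (by omega)]
  have hleft := HahnSeries.coeff_single_mul_add (r := (1 : A)) (b := -q) (a := m + q)
    (x := HahnSeries.ofPowerSeries ℤ A (PowerSeries.mk fun p : ℕ => R (p, q')))
  have hright := HahnSeries.coeff_mul_single_add (r := (1 : A)) (b := -q') (a := m + q')
    (x := HahnSeries.ofPowerSeries ℤ A (PowerSeries.mk fun p : ℕ => R (p, q)))
  rw [add_neg_cancel_right, one_mul, HahnSeries.coeff_ofPowerSeries_mk (fun p => R (p, q'))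
    (by omega)] at hleft
  rw [add_neg_cancel_right, mul_one, HahnSeries.coeff_ofPowerSeries_mk (fun p => R (p, q))
    (by omega)] at hright
  rw [theta, theta, add_mul, mul_add, mul_add, HahnSeries.coeff_add, HahnSeries.coeff_add,
    HahnSeries.coeff_add, hsingle, hleft, hright,
    HahnSeries.coeff_ofPowerSeries_mk_mul (fun p => R (p, q)) (fun p => R (p, q')) hm, zero_add,
    add_assoc]

end

/-- Let `A` be a commutative ring and `R : ℤ × ℤ → A` a function with
`R (p, q) = 0` whenever `p ≤ 0` or `q ≤ 0`.  In the ring of formal Laurent series over `A`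
set `ϑ₀ := 1` and, for `q ≥ 1`, `ϑ_q := u^(-q) + ∑_{p ≥ 1} R (p, q) • u^p`.
Fix `k ≥ 1` and assume the multiplication rule
`ϑ₁ * ϑ_k = ϑ_{k+1} + ∑_{r=0}^{k} R (k - r, 1) • ϑ_r + ∑_{r=0}^{k} R (1 - r, k) • ϑ_r`.
Then for every integer `n > k`:
`R (n-k, k+1) + ∑_{r=1}^{k-1} R (k-r, 1) * R (n-k, r)
  = R (n-k+1, k) + R (n, 1) + ∑_{a=1}^{n-k-1} R (a, 1) * R (n-k-a, k)`. -/
theorem statement1 (A : Type*) [CommRing A] (R : ℤ × ℤ → A)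
    (hvanish : ∀ p q : ℤ, p ≤ 0 ∨ q ≤ 0 → R (p, q) = 0)
    (θ : ℤ → LaurentSeries A)
    (hθ0 : θ 0 = 1)
    (hθ : ∀ q : ℤ, 1 ≤ q →
      θ q = HahnSeries.single (-q) (1 : A) +
        HahnSeries.ofPowerSeries ℤ A
          (PowerSeries.mk fun p : ℕ => if 1 ≤ p then R ((p : ℤ), q) else 0))
    (k : ℤ) (hk : 1 ≤ k)
    (hmul : θ 1 * θ k = θ (k + 1)
        + (∑ r ∈ Finset.Icc (0 : ℤ) k, R (k - r, 1) • θ r)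
        + ∑ r ∈ Finset.Icc (0 : ℤ) k, R (1 - r, k) • θ r) :
    ∀ n : ℤ, k < n →
      R (n - k, k + 1) + ∑ r ∈ Finset.Icc (1 : ℤ) (k - 1), R (k - r, 1) * R (n - k, r)
        = R (n - k + 1, k) + R (n, 1)
          + ∑ a ∈ Finset.Icc (1 : ℤ) (n - k - 1), R (a, 1) * R (n - k - a, k) := by
  intro n hn
  have hθ_eq : ∀ q, 1 ≤ q → θ q = theta R q := fun q hq => by
    rw [hθ q hq, theta,
      PowerSeries.mk_ite_one_le_eq (fun p => R (p, q)) fun p hp => hvanish p q (.inl hp)]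
  have hR_fst : ∀ q, R (0, q) = 0 := fun q => hvanish 0 q (.inl le_rfl)
  have hR_snd : ∀ p, R (p, 0) = 0 := fun p => hvanish p 0 (.inr le_rfl)
  have hcoeff : ∀ r, 0 ≤ r → (θ r).coeff (n - k) = R (n - k, r) := fun r hr => by
    obtain rfl | hr := hr.eq_or_lt
    · rw [hθ0, HahnSeries.coeff_one, if_neg (by omega), hR_snd]
    · rw [hθ_eq r hr, coeff_theta R hr (by omega)]
  have key := congrArg (fun x : LaurentSeries A => x.coeff (n - k)) hmul
  simp only [HahnSeries.coeff_add, HahnSeries.coeff_sum, HahnSeries.coeff_smul, smul_eq_mul] at key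
  rw [hθ_eq 1 le_rfl, hθ_eq k hk, coeff_theta_mul_theta R one_pos hk (by omega),
    hcoeff (k + 1) (by omega)] at key
  have hconv : ∑ a ∈ Finset.Icc 0 (n - k), R (a, 1) * R (n - k - a, k) =
      ∑ a ∈ Finset.Icc 1 (n - k - 1), R (a, 1) * R (n - k - a, k) := by
    rw [Finset.sum_Icc_eq_sum_Icc_add_one_sub_one (by rw [hR_fst, zero_mul])
      (by rw [sub_self, hR_fst, mul_zero]), zero_add]
  have hsum₁ : ∑ r ∈ Finset.Icc 0 k, R (k - r, 1) * (θ r).coeff (n - k) =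
      ∑ r ∈ Finset.Icc 1 (k - 1), R (k - r, 1) * R (n - k, r) := by
    rw [Finset.sum_congr rfl fun r hr => by rw [hcoeff r (Finset.mem_Icc.1 hr).1],
      Finset.sum_Icc_eq_sum_Icc_add_one_sub_one (by rw [hR_snd, mul_zero])
        (by rw [sub_self, hR_fst, zero_mul]), zero_add]
  have hsum₂ : ∑ r ∈ Finset.Icc 0 k, R (1 - r, k) * (θ r).coeff (n - k) = 0 := by
    refine Finset.sum_eq_zero fun r hr => ?_
    rw [hcoeff r (Finset.mem_Icc.1 hr).1]
    obtain rfl | hr := (Finset.mem_Icc.1 hr).1.eq_or_lt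
    · rw [hR_snd, mul_zero]
    · rw [hvanish _ _ (.inl (by omega)), zero_mul]
  rw [hconv, hsum₁, hsum₂, add_zero, sub_add_cancel] at key
  exact key.symm
end

section
/- Let P ⊂ ℝ² be a Fano polygon. Let v and w be adjacent vertices of P with det(v|w) > 0 (i.e. w follows v in counterclockwise order), and let m ∈ ℤ² be the primitive vector with w − v ∈ ℤ_{>0}·m. Then det(v|m) = 1. Equivalently, if m′ ∈ ℤ² is the primitive vector with v − w ∈ ℤ_{>0}·m′, then det(w|m′) = −1. -/
/-!
Write `d = det(v|m)`, which is positive since `det(v|w) = c · d`. If `d ≥ 2`, primitivity of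
`v` and `m` yields an integer `0 < k < d` and a lattice point `e` with `k v + m = d e`. Then
`e = (k / d) (v + m / k)` is a proper contraction towards the origin of a point of the edge, hence
an interior point of `P`; so `e = 0`, i.e. `m = -k v`, which contradicts `det(v|m) ≠ 0`.
-/

/-- The determinant `det(a|b)`. -/
def cross (a b : ℤ × ℤ) : ℤ := a.1 * b.2 - a.2 * b.1

lemma cross_self_smul_add (v m : ℤ × ℤ) (c : ℤ) : cross v (c • v + m) = cross v m := by
  simp only [cross, Prod.fst_add, Prod.snd_add, Prod.smul_fst, Prod.smul_snd, smul_eq_mul]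
  ring

lemma cross_add_smul (v m : ℤ × ℤ) (c : ℤ) : cross v (v + c • m) = c * cross v m := by
  simp only [cross, Prod.fst_add, Prod.snd_add, Prod.smul_fst, Prod.smul_snd, smul_eq_mul]
  ring

lemma exists_smul_add_eq_cross_smul {v m : ℤ × ℤ} (hv : Int.gcd v.1 v.2 = 1)
    (hm : Int.gcd m.1 m.2 = 1) (hd : 1 < cross v m) :
    ∃ k : ℤ, ∃ e : ℤ × ℤ, 0 < k ∧ k < cross v m ∧ k • v + m = cross v m • e := by
  set d := cross v m with hd_def
  obtain ⟨s, t, hst⟩ := Int.isCoprime_iff_gcd_eq_one.mpr hv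
  -- `(-t, s)` completes `v` to a basis of `ℤ²`, in which `m = l • v + d • (-t, s)`.
  set l := s * m.1 + t * m.2
  have hm_basis : m = l • v + d • (-t, s) := by
    ext <;> simp only [hd_def, cross, Prod.fst_add, Prod.snd_add, Prod.smul_fst, Prod.smul_snd,
      smul_eq_mul, l]
    · linear_combination (-m.1) * hst
    · linear_combination (-m.2) * hst
  set k := (-l) % d
  have hq : k + l = d * -((-l) / d) := by linarith [Int.emod_add_mul_ediv (-l) d]
  have hk : k • v + m = d • (-((-l) / d) • v + (-t, s)) := by
    rw [hm_basis, smul_add, smul_smul, ← add_assoc, ← add_smul, hq]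
  refine ⟨k, _, lt_of_le_of_ne (Int.emod_nonneg _ (by omega)) fun hk0 => ?_,
    Int.emod_lt_of_pos _ (by omega), hk⟩
  -- `k = 0` would make `d` divide the primitive vector `m`.
  rw [← hk0, zero_smul, zero_add] at hk
  have hdvd : d ∣ (Int.gcd m.1 m.2 : ℤ) :=
    Int.dvd_coe_gcd ⟨_, congrArg Prod.fst hk⟩ ⟨_, congrArg Prod.snd hk⟩
  rw [hm] at hdvd
  have := Int.le_of_dvd one_pos hdvd
  omega

lemma eq_of_smul_eq_smul_of_gcd_eq_one {m m' : ℤ × ℤ} (hm : Int.gcd m.1 m.2 = 1)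
    (hm' : Int.gcd m'.1 m'.2 = 1) {c c' : ℤ} (hc : 0 < c) (hc' : 0 < c') (h : c • m = c' • m') :
    m = m' := by
  have hgcd := congrArg (fun p : ℤ × ℤ => Int.gcd p.1 p.2) h
  simp only [Prod.smul_fst, Prod.smul_snd, smul_eq_mul, Int.gcd_mul_left, hm, hm'] at hgcd
  obtain rfl : c = c' := by omega
  exact smul_right_injective _ hc.ne' h

lemma smul_mem_interior_of_mem_closure {E : Type*} [AddCommGroup E] [Module ℝ E]
    [TopologicalSpace E] [IsTopologicalAddGroup E] [ContinuousSMul ℝ E] {s : Set E}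
    (hs : Convex ℝ s) (h0 : (0 : E) ∈ interior s) {y : E} (hy : y ∈ closure s) {t : ℝ}
    (ht₀ : 0 ≤ t) (ht₁ : t < 1) : t • y ∈ interior s := by
  simpa using hs.combo_interior_closure_mem_interior h0 hy (sub_pos.mpr ht₁) ht₀ (by ring)

lemma add_smul_mem_segment_add_smul {E : Type*} [AddCommGroup E] [Module ℝ E] (x y : E)
    {s t : ℝ} (hs : 0 ≤ s) (hst : s ≤ t) (ht : 0 < t) : x + s • y ∈ segment ℝ x (x + t • y) := by
  rw [segment_eq_image']
  refine ⟨s / t, ⟨div_nonneg hs ht.le, div_le_one_of_le₀ hst ht.le⟩, ?_⟩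
  dsimp only
  rw [add_sub_cancel_left, smul_smul, div_mul_cancel₀ s ht.ne']

def toPlane (p : ℤ × ℤ) : ℝ × ℝ := ((p.1 : ℝ), (p.2 : ℝ))

lemma toPlane_injective : Function.Injective toPlane := fun p q h => by
  simp only [toPlane, Prod.mk.injEq, Int.cast_inj] at h
  exact Prod.ext h.1 h.2

@[simp] lemma toPlane_add (p q : ℤ × ℤ) : toPlane (p + q) = toPlane p + toPlane q := by
  simp [toPlane]

@[simp] lemma toPlane_smul (k : ℤ) (p : ℤ × ℤ) : toPlane (k • p) = (k : ℝ) • toPlane p := by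
  simp [toPlane]

lemma cross_eq_one_of_segment_subset_closure {P : Set (ℝ × ℝ)} (hP : Convex ℝ P)
    (h0 : (0 : ℝ × ℝ) ∈ interior P) (hint : ∀ p, toPlane p ∈ interior P → p = 0)
    {v m : ℤ × ℤ} (hv : Int.gcd v.1 v.2 = 1) (hm : Int.gcd m.1 m.2 = 1) (hpos : 0 < cross v m)
    (hseg : segment ℝ (toPlane v) (toPlane (v + m)) ⊆ closure P) : cross v m = 1 := by
  by_contra hne
  obtain ⟨k, e, hk, hkd, he⟩ := exists_smul_add_eq_cross_smul hv hm (by omega)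
  set d := cross v m
  have hkR : (1 : ℝ) ≤ k := by exact_mod_cast hk
  have hkdR : (k : ℝ) < d := by exact_mod_cast hkd
  set Y := toPlane v + (k : ℝ)⁻¹ • toPlane m
  have hY : Y ∈ closure P := hseg <| by
    simpa using add_smul_mem_segment_add_smul (toPlane v) (toPlane m) (inv_nonneg.mpr (by linarith))
      (inv_le_one_of_one_le₀ hkR) one_pos
  have heY : toPlane e = ((k : ℝ) / d) • Y := by
    have heR : (d : ℝ) • toPlane e = (k : ℝ) • toPlane v + toPlane m := by
      simpa only [toPlane_add, toPlane_smul] using (congrArg toPlane he).symm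
    calc toPlane e = (d : ℝ)⁻¹ • ((d : ℝ) • toPlane e) := by
          rw [smul_smul, inv_mul_cancel₀ (by linarith), one_smul]
      _ = ((k : ℝ) / d) • Y := by
          rw [heR]
          match_scalars <;> field_simp
  have he0 : e = 0 := hint e <| heY ▸ smul_mem_interior_of_mem_closure hP h0 hY
    (by positivity) ((div_lt_one (by linarith)).mpr hkdR)
  have hcross := cross_self_smul_add v m k
  rw [he, he0, smul_zero] at hcross
  exact hpos.ne' (hcross.symm.trans (by simp [cross]))

theorem statement3_general
    (S : Finset (ℤ × ℤ)) (P : Set (ℝ × ℝ))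
    (hP : P = convexHull ℝ ((fun p : ℤ × ℤ => ((p.1 : ℝ), (p.2 : ℝ))) '' (S : Set (ℤ × ℤ))))
    (h0 : (0 : ℝ × ℝ) ∈ interior P)
    (hvert : ∀ x ∈ Set.extremePoints ℝ P,
      ∃ p : ℤ × ℤ, Int.gcd p.1 p.2 = 1 ∧ x = ((p.1 : ℝ), (p.2 : ℝ)))
    (hint : ∀ p : ℤ × ℤ, ((p.1 : ℝ), (p.2 : ℝ)) ∈ interior P → p = 0)
    (v w : ℤ × ℤ)
    (hv : ((v.1 : ℝ), (v.2 : ℝ)) ∈ Set.extremePoints ℝ P)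
    (hadj : segment ℝ ((v.1 : ℝ), (v.2 : ℝ)) ((w.1 : ℝ), (w.2 : ℝ)) ⊆ frontier P)
    (horient : 0 < v.1 * w.2 - v.2 * w.1)
    (m : ℤ × ℤ) (hm : Int.gcd m.1 m.2 = 1)
    (c : ℤ) (hc : 0 < c) (hwm : w - v = c • m) :
    v.1 * m.2 - v.2 * m.1 = 1 ∧
      ∀ m' : ℤ × ℤ, Int.gcd m'.1 m'.2 = 1 →
        ∀ c' : ℤ, 0 < c' → v - w = c' • m' → w.1 * m'.2 - w.2 * m'.1 = -1 := by
  obtain rfl : w = v + c • m := eq_add_of_sub_eq' hwm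
  have hconv : Convex ℝ P := hP ▸ convex_convexHull ℝ _
  have hv_prim : Int.gcd v.1 v.2 = 1 := by
    obtain ⟨p, hp, hvp⟩ := hvert _ hv
    rwa [toPlane_injective (a₁ := v) (a₂ := p) hvp]
  have hpos : 0 < cross v m :=
    pos_of_mul_pos_right (cross_add_smul v m c ▸ horient : 0 < c * cross v m) hc.le
  have hseg : segment ℝ (toPlane v) (toPlane (v + m)) ⊆ closure P := by
    have hvm : toPlane (v + m) ∈ segment ℝ (toPlane v) (toPlane (v + c • m)) := by
      simpa only [toPlane_add, toPlane_smul, one_smul] using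
        add_smul_mem_segment_add_smul (toPlane v) (toPlane m) zero_le_one
        (by exact_mod_cast hc : (1 : ℝ) ≤ c) (by exact_mod_cast hc)
    exact ((convex_segment _ _).segment_subset (left_mem_segment ℝ _ _) hvm).trans
      (hadj.trans frontier_subset_closure)
  have hmain : cross v m = 1 := cross_eq_one_of_segment_subset_closure hconv h0 hint
    hv_prim hm hpos hseg
  refine ⟨hmain, fun m' hm' c' hc' hvw => ?_⟩
  have hm'_eq : -m = m' := eq_of_smul_eq_smul_of_gcd_eq_one (by simpa using hm) hm' hc hc'
    (by rw [← hvw, smul_neg]; abel)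
  subst hm'_eq
  simp only [cross, Prod.fst_add, Prod.snd_add, Prod.smul_fst, Prod.smul_snd, smul_eq_mul,
    Prod.fst_neg, Prod.snd_neg] at hmain ⊢
  linear_combination -hmain

/-- Let `P ⊂ ℝ²` be a Fano polygon: the convex hull of a finite set of
integer points, with the origin in its interior, all of its vertices (= extreme points)
primitive integer vectors, and the origin the only integer point in its interior.
Let `v` and `w` be adjacent vertices (distinct vertices spanning a segment contained in the
boundary of `P`) with `det(v|w) > 0`, and let `m` be the primitive integer vector with
`w - v ∈ ℤ_{>0}·m`.  Then `det(v|m) = 1`; equivalently, if `m'` is the primitive integer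
vector with `v - w ∈ ℤ_{>0}·m'`, then `det(w|m') = -1`. -/
theorem statement3
    (S : Finset (ℤ × ℤ)) (P : Set (ℝ × ℝ))
    (hP : P = convexHull ℝ ((fun p : ℤ × ℤ => ((p.1 : ℝ), (p.2 : ℝ))) '' (S : Set (ℤ × ℤ))))
    (h0 : (0 : ℝ × ℝ) ∈ interior P)
    (hvert : ∀ x ∈ Set.extremePoints ℝ P,
      ∃ p : ℤ × ℤ, Int.gcd p.1 p.2 = 1 ∧ x = ((p.1 : ℝ), (p.2 : ℝ)))
    (hint : ∀ p : ℤ × ℤ, ((p.1 : ℝ), (p.2 : ℝ)) ∈ interior P → p = 0)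
    (v w : ℤ × ℤ)
    (hv : ((v.1 : ℝ), (v.2 : ℝ)) ∈ Set.extremePoints ℝ P)
    (hw : ((w.1 : ℝ), (w.2 : ℝ)) ∈ Set.extremePoints ℝ P)
    (hne : v ≠ w)
    (hadj : segment ℝ ((v.1 : ℝ), (v.2 : ℝ)) ((w.1 : ℝ), (w.2 : ℝ)) ⊆ frontier P)
    (horient : 0 < v.1 * w.2 - v.2 * w.1)
    (m : ℤ × ℤ) (hm : Int.gcd m.1 m.2 = 1)
    (c : ℤ) (hc : 0 < c) (hwm : w - v = c • m) :
    v.1 * m.2 - v.2 * m.1 = 1 ∧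
      ∀ m' : ℤ × ℤ, Int.gcd m'.1 m'.2 = 1 →
        ∀ c' : ℤ, 0 < c' → v - w = c' • m' → w.1 * m'.2 - w.2 * m'.1 = -1 :=
  statement3_general S P hP h0 hvert hint v w hv hadj horient m hm c hc hwm
end

section
/- Let P ⊂ ℝ² be a Fano polygon and let v₁, v₂ be adjacent vertices of P with det(v₁|v₂) > 0 such that v₂ − v₁ is a primitive vector of ℤ² (the edge [v₁,v₂] has lattice length 1). Let m₁ ∈ ℤ² be the primitive direction, pointing away from v₁, of the edge of P at v₁ other than [v₁,v₂]. Then: (i) det(v₁|v₂) = 1; and (ii) det(v₂|m₁) = det(v₂ − v₁|m₁) − 1. -/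
/-!
Both parts rest on one bound: if `w₁, w₂` are primitive lattice points of `P` with
`w₂ - w₁ = c • e`, `c > 0`, `e` primitive, then `det(w₁|e) ≤ 1`. Otherwise `h = det(w₁|e) ≥ 2`;
since `w₁` is primitive there is `0 ≤ j < h` with `h ∣ j w₁ + e`, and primitivity of `e` and `w₂`
forces `j c ≥ 2`. Then `q = (j w₁ + e) / h = ((j c - 1) w₁ + w₂) / (c h)` is a nonzero lattice
point of the open triangle `0 w₁ w₂`, hence of the interior of `P`.

The bound for the edge `[v₁, v₂]` is (i). Part (ii) says `det(m₁|v₁) = 1`; the bound for the edge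
`[v₀, v₁]` gives `det(m₁|v₁) ≤ 1`, and `det(m₁|v₁) > 0` because the supporting lines of the two
edges at `v₁` put the non-collinear vertices `v₀` and `v₂` on opposite sides of the line `0 v₁`.
-/

section ConvexGeometry

variable {E : Type*} [TopologicalSpace E] [AddCommGroup E] [IsTopologicalAddGroup E]
  [Module ℝ E] [ContinuousSMul ℝ E] {P : Set E}

theorem Convex.add_smul_mem_interior_of_add_lt_one (hP : Convex ℝ P) (h0 : (0 : E) ∈ interior P)
    {x y : E} (hx : x ∈ P) (hy : y ∈ P) {a b : ℝ} (ha : 0 < a) (hb : 0 < b) (hab : a + b < 1) :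
    a • x + b • y ∈ interior P := by
  have hs : 0 < a + b := by linarith
  have hz : (a / (a + b)) • x + (b / (a + b)) • y ∈ P :=
    hP hx hy (by positivity) (by positivity) (by field_simp)
  have hmem := hP.combo_interior_self_mem_interior h0 hz (by linarith : 0 < 1 - (a + b)) hs.le
    (by ring)
  rwa [smul_zero, zero_add, smul_add, smul_smul, smul_smul, mul_div_cancel₀ _ hs.ne',
    mul_div_cancel₀ _ hs.ne'] at hmem

theorem Convex.exists_dual_eq_one_of_segment_subset_frontier (hP : Convex ℝ P)
    (h0 : (0 : E) ∈ interior P) {x y : E} (hxy : segment ℝ x y ⊆ frontier P) :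
    ∃ f : StrongDual ℝ E, f x = 1 ∧ f y = 1 ∧ ∀ z ∈ P, f z ≤ 1 := by
  have hmid : (2⁻¹ : ℝ) • x + (2⁻¹ : ℝ) • y ∈ frontier P :=
    hxy ⟨2⁻¹, 2⁻¹, by norm_num, by norm_num, by norm_num, rfl⟩
  obtain ⟨f, hfmid, hf⟩ := separate_convex_open_set h0 hP.interior isOpen_interior hmid.2
  have hle : ∀ z ∈ closure P, f z ≤ 1 := by
    rw [← hP.closure_interior_eq_closure_of_nonempty_interior ⟨0, h0⟩]
    exact closure_minimal (fun z hz => (hf z hz).le) (isClosed_le f.continuous continuous_const)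
  have hfx := hle x (frontier_subset_closure (hxy (left_mem_segment ℝ x y)))
  have hfy := hle y (frontier_subset_closure (hxy (right_mem_segment ℝ x y)))
  rw [map_add, map_smul, map_smul, smul_eq_mul, smul_eq_mul] at hfmid
  exact ⟨f, by linarith, by linarith, fun z hz => hle z (subset_closure hz)⟩

end ConvexGeometry

theorem not_sub_eq_smul_sub_of_mem_extremePoints {E : Type*} [AddCommGroup E] [Module ℝ E]
    {P : Set E} {x y z : E} (hx : x ∈ P.extremePoints ℝ) (hy : y ∈ P.extremePoints ℝ)
    (hz : z ∈ P.extremePoints ℝ) (hxy : x ≠ y) (hxz : x ≠ z) (hyz : y ≠ z) (t : ℝ) :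
    z - x ≠ t • (y - x) := by
  intro h
  have hz' : z = (1 - t) • x + t • y := by linear_combination (norm := module) h
  rcases lt_trichotomy t 0 with ht | rfl | ht
  · have h1t : 0 < 1 - t := by linarith
    have hseg : x ∈ openSegment ℝ y z := by
      refine ⟨-t / (1 - t), 1 / (1 - t), div_pos (by linarith) h1t, by positivity,
        by field_simp; ring, ?_⟩
      rw [hz']
      match_scalars
      · field_simp; ring
      · field_simp
    exact hxy (hx.2 hy.1 hz.1 hseg).symm
  · exact hxz (by simpa using hz'.symm)
  rcases lt_trichotomy t 1 with ht1 | rfl | ht1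
  · exact hxz (hz.2 hx.1 hy.1 ⟨1 - t, t, by linarith, ht, by ring, hz'.symm⟩)
  · exact hyz (by simpa using hz'.symm)
  · have hseg : y ∈ openSegment ℝ x z := by
      refine ⟨1 - 1 / t, 1 / t, by rw [sub_pos, div_lt_one ht]; exact ht1, by positivity,
        by ring, ?_⟩
      rw [hz']
      match_scalars
      · field_simp; ring
      · field_simp
    exact hxy (hy.2 hx.1 hz.1 hseg)

namespace FanoPolygon

def det {R : Type*} [CommRing R] (a b : R × R) : R := a.1 * b.2 - a.2 * b.1

section Det

variable {R : Type*} [CommRing R] (a b c : R × R) (r : R)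

theorem det_swap : det b a = -det a b := by simp only [det]; ring

theorem det_self : det a a = 0 := by simp only [det]; ring

theorem det_add_left : det (a + b) c = det a c + det b c := by
  simp only [det, Prod.fst_add, Prod.snd_add]; ring

theorem det_add_right : det a (b + c) = det a b + det a c := by
  simp only [det, Prod.fst_add, Prod.snd_add]; ring

theorem det_sub_left : det (a - b) c = det a c - det b c := by
  simp only [det, Prod.fst_sub, Prod.snd_sub]; ring

theorem det_sub_right : det a (b - c) = det a b - det a c := by
  simp only [det, Prod.fst_sub, Prod.snd_sub]; ring

theorem det_smul_left : det (r • a) b = r * det a b := by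
  simp only [det, Prod.smul_fst, Prod.smul_snd, smul_eq_mul]; ring

theorem det_smul_right : det a (r • b) = r * det a b := by
  simp only [det, Prod.smul_fst, Prod.smul_snd, smul_eq_mul]; ring

theorem det_neg_right : det a (-b) = -det a b := by
  simp only [det, Prod.fst_neg, Prod.snd_neg]; ring

end Det

theorem det_sub_sub_eq_mul {R : Type*} [CommRing R] (f : R × R →ₗ[R] R) {x y : R × R}
    (hx : f x = 1) (hy : f y = 1) (z : R × R) :
    det (y - x) (z - x) = det x y * (1 - f z) := by
  have hf : ∀ p : R × R, f p = p.1 * f (1, 0) + p.2 * f (0, 1) := by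
    intro p
    conv_lhs => rw [show p = p.1 • ((1 : R), (0 : R)) + p.2 • ((0 : R), (1 : R)) by ext <;> simp]
    rw [map_add, map_smul, map_smul, smul_eq_mul, smul_eq_mul]
  rw [hf] at hx hy ⊢
  simp only [det, Prod.fst_sub, Prod.snd_sub]
  linear_combination (z.1 * y.2 - z.2 * y.1) * hx + (x.1 * z.2 - x.2 * z.1) * hy

theorem exists_eq_smul_of_det_eq_zero {K : Type*} [Field K] {a b : K × K} (ha : a ≠ 0)
    (h : det a b = 0) : ∃ t : K, b = t • a := by
  unfold det at h
  by_cases h1 : a.1 = 0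
  · have h2 : a.2 ≠ 0 := fun h2 => ha (Prod.ext h1 h2)
    refine ⟨b.2 / a.2, Prod.ext ?_ ?_⟩
    · simp only [Prod.smul_fst, smul_eq_mul, h1] at h ⊢
      field_simp
      linear_combination -h
    · simp [h2]
  · refine ⟨b.1 / a.1, Prod.ext ?_ ?_⟩
    · simp [h1]
    · simp only [Prod.smul_snd, smul_eq_mul]
      field_simp
      linear_combination h

theorem det_neg_of_segments_subset_frontier {P : Set (ℝ × ℝ)} (hP : Convex ℝ P)
    (h0 : (0 : ℝ × ℝ) ∈ interior P) {x₀ x₁ x₂ : ℝ × ℝ} (hx₀ : x₀ ∈ P.extremePoints ℝ)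
    (hx₁ : x₁ ∈ P.extremePoints ℝ) (hx₂ : x₂ ∈ P.extremePoints ℝ) (h₀₁ : x₀ ≠ x₁)
    (h₀₂ : x₀ ≠ x₂) (h₁₂ : x₁ ≠ x₂) (hseg₂ : segment ℝ x₁ x₂ ⊆ frontier P)
    (hseg₀ : segment ℝ x₁ x₀ ⊆ frontier P) (hdet : 0 < det x₁ x₂) : det x₁ x₀ < 0 := by
  obtain ⟨f, hf₁, hf₂, hf⟩ := hP.exists_dual_eq_one_of_segment_subset_frontier h0 hseg₂
  obtain ⟨g, hg₁, hg₀, hg⟩ := hP.exists_dual_eq_one_of_segment_subset_frontier h0 hseg₀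
  have hside₀ : det (x₂ - x₁) (x₀ - x₁) = det x₁ x₂ * (1 - f x₀) :=
    det_sub_sub_eq_mul (f : ℝ × ℝ →ₗ[ℝ] ℝ) hf₁ hf₂ x₀
  have hside₂ : det (x₀ - x₁) (x₂ - x₁) = det x₁ x₀ * (1 - g x₂) :=
    det_sub_sub_eq_mul (g : ℝ × ℝ →ₗ[ℝ] ℝ) hg₁ hg₀ x₂
  have hcoll : det (x₂ - x₁) (x₀ - x₁) ≠ 0 := fun h =>
    have ⟨t, ht⟩ := exists_eq_smul_of_det_eq_zero (sub_ne_zero.2 h₁₂.symm) h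
    not_sub_eq_smul_sub_of_mem_extremePoints hx₁ hx₂ hx₀ h₁₂ h₀₁.symm h₀₂.symm t ht
  have hpos : 0 < det (x₂ - x₁) (x₀ - x₁) :=
    (hside₀ ▸ mul_nonneg hdet.le (sub_nonneg.2 (hf x₀ hx₀.1))).lt_of_ne hcoll.symm
  rw [det_swap, hside₀] at hside₂
  exact neg_of_mul_neg_left (by linarith) (sub_nonneg.2 (hg x₂ hx₂.1))

theorem natAbs_eq_one_of_gcd_smul_eq_one {k : ℤ} {q : ℤ × ℤ}
    (h : Int.gcd (k • q).1 (k • q).2 = 1) : k.natAbs = 1 := by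
  rw [Prod.smul_fst, Prod.smul_snd, smul_eq_mul, smul_eq_mul, Int.gcd_mul_left] at h
  exact Nat.eq_one_of_mul_eq_one_right h

theorem exists_smul_eq_smul_add {w e : ℤ × ℤ} (hw : Int.gcd w.1 w.2 = 1) {h : ℤ} (hh : 0 < h)
    (hdvd : h ∣ det w e) : ∃ j : ℤ, ∃ q : ℤ × ℤ, 0 ≤ j ∧ j < h ∧ h • q = j • w + e := by
  obtain ⟨d, hd⟩ := hdvd
  have hbez : w.1 * Int.gcdA w.1 w.2 + w.2 * Int.gcdB w.1 w.2 = 1 := by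
    rw [← Int.gcd_eq_gcd_ab, hw, Nat.cast_one]
  set a := Int.gcdA w.1 w.2
  set b := Int.gcdB w.1 w.2
  set l := a * e.1 + b * e.2
  -- in the basis `w, (-b, a)` of `ℤ²` the vector `e` has coordinates `(l, det w e)`
  have he : e = l • w + det w e • ((-b, a) : ℤ × ℤ) := by
    unfold det
    ext
    · simp only [Prod.fst_add, Prod.smul_fst, smul_eq_mul]; linear_combination (-e.1) * hbez
    · simp only [Prod.snd_add, Prod.smul_snd, smul_eq_mul]; linear_combination (-e.2) * hbez
  refine ⟨(-l) % h, d • ((-b, a) : ℤ × ℤ) - ((-l) / h) • w, Int.emod_nonneg _ hh.ne',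
    Int.emod_lt_of_pos _ hh, ?_⟩
  rw [Int.emod_def]
  rw [hd] at he
  linear_combination (norm := module) -he

def castPair (p : ℤ × ℤ) : ℝ × ℝ := ((p.1 : ℝ), (p.2 : ℝ))

theorem castPair_injective : Function.Injective castPair := by
  intro p q h
  simp only [castPair, Prod.mk.injEq, Int.cast_inj] at h
  exact Prod.ext h.1 h.2

theorem det_castPair (a b : ℤ × ℤ) : det (castPair a) (castPair b) = det a b := by
  simp [det, castPair]

theorem det_le_one_of_sub_eq_smul {P : Set (ℝ × ℝ)} (hP : Convex ℝ P)
    (h0 : (0 : ℝ × ℝ) ∈ interior P) (hint : ∀ p : ℤ × ℤ, castPair p ∈ interior P → p = 0)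
    {w₁ w₂ e : ℤ × ℤ} (hw₁ : castPair w₁ ∈ P) (hw₂ : castPair w₂ ∈ P)
    (hw₁p : Int.gcd w₁.1 w₁.2 = 1) (hw₂p : Int.gcd w₂.1 w₂.2 = 1) (hep : Int.gcd e.1 e.2 = 1)
    {c : ℤ} (hc : 0 < c) (hce : w₂ - w₁ = c • e) : det w₁ e ≤ 1 := by
  by_contra! hh
  set h := det w₁ e with hdef
  obtain ⟨j, q, hj0, hjh, hq⟩ := exists_smul_eq_smul_add hw₁p (by omega : 0 < h) dvd_rfl
  have hj1 : j ≠ 0 := by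
    rintro rfl
    rw [zero_smul, zero_add] at hq
    have := natAbs_eq_one_of_gcd_smul_eq_one (hq ▸ hep)
    omega
  have hjc : 2 ≤ j * c := by
    obtain rfl | hc2 : c = 1 ∨ 2 ≤ c := by omega
    · have hj2 : j ≠ 1 := by
        rintro rfl
        rw [one_smul] at hq hce
        rw [← eq_add_of_sub_eq' hce] at hq
        have := natAbs_eq_one_of_gcd_smul_eq_one (hq ▸ hw₂p)
        omega
      omega
    · have : 1 ≤ j := by omega
      nlinarith
  have hcomb : (c * h) • q = (j * c - 1) • w₁ + w₂ := by
    linear_combination (norm := module) c • hq - hce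
  have hcR : (0 : ℝ) < c * h := by exact_mod_cast (by positivity : 0 < c * h)
  have hqR : castPair q =
      ((j * c - 1) / (c * h) : ℝ) • castPair w₁ + (1 / (c * h) : ℝ) • castPair w₂ := by
    have h1 := congrArg (fun p => ((p.1 : ℝ))) hcomb
    have h2 := congrArg (fun p => ((p.2 : ℝ))) hcomb
    simp only [Prod.smul_fst, Prod.smul_snd, Prod.fst_add, Prod.snd_add, smul_eq_mul] at h1 h2
    push_cast at h1 h2
    ext
    · simp only [castPair, Prod.smul_fst, Prod.fst_add, smul_eq_mul]
      field_simp
      linear_combination h1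
    · simp only [castPair, Prod.smul_snd, Prod.snd_add, smul_eq_mul]
      field_simp
      linear_combination h2
  have hjcR : (2 : ℝ) ≤ j * c := by exact_mod_cast hjc
  have hjhR : (j * c : ℝ) < c * h := by
    have : (j : ℝ) < h := by exact_mod_cast hjh
    have : (0 : ℝ) < c := by exact_mod_cast hc
    nlinarith
  have hq0 : q = 0 := hint q <| hqR ▸ hP.add_smul_mem_interior_of_add_lt_one h0 hw₁ hw₂
    (div_pos (by linarith) hcR) (by positivity) (by rw [← add_div, div_lt_one hcR]; linarith)
  rw [hq0, smul_zero] at hq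
  have he : e = (-j) • w₁ := by linear_combination (norm := module) -hq
  have : h = 0 := by rw [hdef, he, det_smul_right, det_self, mul_zero]
  omega

end FanoPolygon

open FanoPolygon

/-- Let `P ⊂ ℝ²` be a Fano polygon (convex hull of a finite set of integer
points, origin in the interior, all vertices primitive, origin the only interior integer
point).  Let `v₁, v₂` be adjacent vertices with `det(v₁|v₂) > 0` such that `v₂ - v₁` is
primitive (the edge `[v₁, v₂]` has lattice length 1).  Let `m₁` be the primitive direction,
pointing away from `v₁`, of the edge of `P` at `v₁` other than `[v₁, v₂]` (i.e. `v₀` is the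
other vertex adjacent to `v₁` and `v₀ - v₁ ∈ ℤ_{>0}·m₁`).  Then
(i) `det(v₁|v₂) = 1` and (ii) `det(v₂|m₁) = det(v₂ - v₁|m₁) - 1`. -/
theorem statement4
    (S : Finset (ℤ × ℤ)) (P : Set (ℝ × ℝ))
    (hP : P = convexHull ℝ ((fun p : ℤ × ℤ => ((p.1 : ℝ), (p.2 : ℝ))) '' (S : Set (ℤ × ℤ))))
    (h0 : (0 : ℝ × ℝ) ∈ interior P)
    (hvert : ∀ x ∈ Set.extremePoints ℝ P,
      ∃ p : ℤ × ℤ, Int.gcd p.1 p.2 = 1 ∧ x = ((p.1 : ℝ), (p.2 : ℝ)))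
    (hint : ∀ p : ℤ × ℤ, ((p.1 : ℝ), (p.2 : ℝ)) ∈ interior P → p = 0)
    (v₁ v₂ : ℤ × ℤ)
    (hv₁ : ((v₁.1 : ℝ), (v₁.2 : ℝ)) ∈ Set.extremePoints ℝ P)
    (hv₂ : ((v₂.1 : ℝ), (v₂.2 : ℝ)) ∈ Set.extremePoints ℝ P)
    (hne : v₁ ≠ v₂)
    (hadj : segment ℝ ((v₁.1 : ℝ), (v₁.2 : ℝ)) ((v₂.1 : ℝ), (v₂.2 : ℝ)) ⊆ frontier P)
    (horient : 0 < v₁.1 * v₂.2 - v₁.2 * v₂.1)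
    (hprim : Int.gcd (v₂ - v₁).1 (v₂ - v₁).2 = 1)
    (v₀ : ℤ × ℤ)
    (hv₀ : ((v₀.1 : ℝ), (v₀.2 : ℝ)) ∈ Set.extremePoints ℝ P)
    (hne₀₁ : v₀ ≠ v₁) (hne₀₂ : v₀ ≠ v₂)
    (hadj₀ : segment ℝ ((v₁.1 : ℝ), (v₁.2 : ℝ)) ((v₀.1 : ℝ), (v₀.2 : ℝ)) ⊆ frontier P)
    (m₁ : ℤ × ℤ) (hm₁ : Int.gcd m₁.1 m₁.2 = 1)
    (c : ℤ) (hc : 0 < c) (hcm : v₀ - v₁ = c • m₁) :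
    v₁.1 * v₂.2 - v₁.2 * v₂.1 = 1 ∧
      v₂.1 * m₁.2 - v₂.2 * m₁.1 = ((v₂ - v₁).1 * m₁.2 - (v₂ - v₁).2 * m₁.1) - 1 := by
  have hconv : Convex ℝ P := hP ▸ convex_convexHull ℝ _
  have hprim_vertex : ∀ v : ℤ × ℤ, castPair v ∈ P.extremePoints ℝ → Int.gcd v.1 v.2 = 1 := by
    intro v hv
    obtain ⟨p, hp, hpv⟩ := hvert _ hv
    rwa [castPair_injective hpv.symm] at hp
  have hv₀eq : v₀ = v₁ + c • m₁ := eq_add_of_sub_eq' hcm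
  have part_i : det v₁ v₂ = 1 := by
    have := det_le_one_of_sub_eq_smul hconv h0 hint hv₁.1 hv₂.1 (hprim_vertex _ hv₁) (hprim_vertex _ hv₂)
      hprim one_pos (one_smul ℤ _).symm
    rw [det_sub_right, det_self, sub_zero] at this
    exact le_antisymm this horient
  have upper : det m₁ v₁ ≤ 1 := by
    have := det_le_one_of_sub_eq_smul hconv h0 hint hv₀.1 hv₁.1 (hprim_vertex _ hv₀) (hprim_vertex _ hv₁)
      (e := -m₁) (by simpa [Int.neg_gcd, Int.gcd_neg] using hm₁) hc (by rw [hv₀eq]; module)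
    rwa [hv₀eq, det_neg_right, det_add_left, det_smul_left, det_self, mul_zero, add_zero,
      ← det_swap] at this
  have lower : det v₁ m₁ < 0 := by
    have : det (castPair v₁) (castPair v₀) < 0 :=
      det_neg_of_segments_subset_frontier hconv h0 hv₀ hv₁ hv₂
        (castPair_injective.ne hne₀₁) (castPair_injective.ne hne₀₂) (castPair_injective.ne hne)
        hadj hadj₀ (show 0 < det (castPair v₁) (castPair v₂) by
          rw [det_castPair]; exact_mod_cast horient)
    rw [det_castPair, hv₀eq, det_add_right, det_smul_right, det_self, zero_add] at this
    exact neg_of_mul_neg_right (by exact_mod_cast this) hc.le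
  rw [det_swap] at upper
  refine ⟨part_i, ?_⟩
  change det v₂ m₁ = det (v₂ - v₁) m₁ - 1
  rw [det_sub_left]
  omega
end

section
/- Let G := −(1/3)·F where F := Σ_{k≥1} (−1)^k · (3k)!/(k·(k!)³) · z^k ∈ ℚ[[z]]. Then G satisfies (1 + 27z)·θ³G + 27z·θ²G + 6z·θG = 2z in ℚ[[z]], where θ denotes the operator G ↦ z·(dG/dz). -/
/-- The power series `F = ∑_{k ≥ 1} (-1)^k (3k)!/(k·(k!)³) zᵏ ∈ ℚ⟦z⟧`. -/
noncomputable def Fseries : PowerSeries ℚ :=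
  PowerSeries.mk fun k =>
    if k = 0 then 0
    else (-1 : ℚ) ^ k * ((3 * k).factorial : ℚ) / ((k : ℚ) * ((k.factorial : ℚ)) ^ 3)

/-- The series `G = -(1/3)·F`. -/
noncomputable def Gseries : PowerSeries ℚ := -((1 / 3 : ℚ) • Fseries)

/-- The operator `θ = z·d/dz` on `ℚ⟦z⟧`. -/
noncomputable def thetaOp (G : PowerSeries ℚ) : PowerSeries ℚ :=
  PowerSeries.X * PowerSeries.derivative ℚ G

/-!
With `A = ∑ (-1)ᵏ (3k)!/(k!)³ zᵏ = ₂F₁(1/3, 2/3; 1; -27z)` one has `θF = A - 1`, and the ratio of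
consecutive coefficients of `A` gives the hypergeometric equation `θ²A + 3z(3θ+1)(3θ+2)A = 0`.
Since `G = -F/3`, the left-hand side equals `-(1/3)(θ² + 3z(3θ+1)(3θ+2))(A - 1) = -(1/3)(-6z) = 2z`.
-/

open PowerSeries

lemma coeff_thetaOp (f : ℚ⟦X⟧) (n : ℕ) : coeff n (thetaOp f) = n * coeff n f := by
  cases n with
  | zero => simp [thetaOp]
  | succ m => rw [thetaOp, coeff_succ_X_mul, coeff_derivative]; push_cast; ring

lemma thetaOp_sub (f g : ℚ⟦X⟧) : thetaOp (f - g) = thetaOp f - thetaOp g := by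
  simp only [thetaOp, map_sub, mul_sub]

lemma thetaOp_one : thetaOp 1 = 0 := by
  simp [thetaOp]

lemma thetaOp_C_mul (c : ℚ) (f : ℚ⟦X⟧) : thetaOp (C c * f) = C c * thetaOp f := by
  rw [thetaOp, thetaOp, ← smul_eq_C_mul, ← smul_eq_C_mul, Derivation.map_smul, mul_smul_comm]

noncomputable def hypergeomSeries : ℚ⟦X⟧ :=
  mk fun k => (-1 : ℚ) ^ k * (3 * k).factorial / (k.factorial : ℚ) ^ 3

lemma coeff_hypergeomSeries_succ (n : ℕ) :
    ((n : ℚ) + 1) ^ 2 * coeff (n + 1) hypergeomSeries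
      = -3 * (3 * n + 1) * (3 * n + 2) * coeff n hypergeomSeries := by
  have h3 : (3 * (n + 1)).factorial
      = (3 * n + 3) * (3 * n + 2) * (3 * n + 1) * (3 * n).factorial := by
    rw [show 3 * (n + 1) = 3 * n + 2 + 1 by ring, Nat.factorial_succ, Nat.factorial_succ,
      Nat.factorial_succ]
    ring
  simp only [hypergeomSeries, coeff_mk, h3, Nat.factorial_succ]
  push_cast
  field_simp
  ring

lemma hypergeomSeries_ode :
    thetaOp (thetaOp hypergeomSeries)
      + 3 * X * (9 * thetaOp (thetaOp hypergeomSeries) + 9 * thetaOp hypergeomSeries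
        + 2 * hypergeomSeries) = 0 := by
  ext n
  cases n with
  | zero => simp [thetaOp]
  | succ n =>
    simp only [← map_ofNat (C (R := ℚ)), mul_assoc, map_add, coeff_C_mul, coeff_succ_X_mul,
      coeff_thetaOp, map_zero]
    push_cast
    linear_combination coeff_hypergeomSeries_succ n

lemma thetaOp_Fseries : thetaOp Fseries = hypergeomSeries - 1 := by
  ext n
  rw [coeff_thetaOp, map_sub, Fseries, hypergeomSeries, coeff_mk, coeff_mk, coeff_one]
  rcases eq_or_ne n 0 with rfl | hn
  · simp
  · have : (n : ℚ) ≠ 0 := by exact_mod_cast hn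
    simp only [hn, if_false]
    field_simp
    ring

lemma Gseries_eq_C_mul : Gseries = C (-1 / 3) * Fseries := by
  rw [Gseries, smul_eq_C_mul, ← neg_mul, ← map_neg]
  norm_num

/-- `G = -(1/3)·F` satisfies `(1 + 27z)·θ³G + 27z·θ²G + 6z·θG = 2z`
in `ℚ⟦z⟧`. -/
theorem statement6 :
    (1 + 27 * PowerSeries.X) * thetaOp (thetaOp (thetaOp Gseries))
      + 27 * PowerSeries.X * thetaOp (thetaOp Gseries)
      + 6 * PowerSeries.X * thetaOp Gseries
      = 2 * PowerSeries.X := by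
  have h6 : C (-1 / 3 : ℚ) * 6 = -2 := by
    rw [← map_ofNat (C (R := ℚ)) 6, ← map_mul, ← map_ofNat (C (R := ℚ)) 2, ← map_neg]
    norm_num
  simp only [Gseries_eq_C_mul, thetaOp_C_mul, thetaOp_Fseries, thetaOp_sub, thetaOp_one, sub_zero]
  linear_combination C (-1 / 3 : ℚ) * hypergeomSeries_ode - X * h6
end
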